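/- arXiv:2308.09967 — 3 statements merged into one kernel-verified Lean document; each statement's English description precedes it below -/
import Mathlib

section
/- Let n ≥ 2 and let K_n be the complete graph on vertices {1,...,n}. Then the n-th symbolic power of its edge ideal satisfies I(K_n)^{(n)} : (x_1 x_2 ⋯ x_n) = I(K_n). -/
open MvPolynomial

/-- The depth of a module over `MvPolynomial V k` with respect to the maximal homogeneous
ideal `(X v : v ∈ V)`, defined as the least `i` with nonvanishing local cohomology. -/
noncomputable def polyDepth (k V : Type) [Field k]
    (M : Type) [AddCommGroup M] [Module (MvPolynomial V k) M] : ℕ :=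
  sInf {i : ℕ |
    Nontrivial ((localCohomology (Ideal.span (Set.range (X : V → MvPolynomial V k))) i).obj
      (ModuleCat.of (MvPolynomial V k) M))}

/-- depth of `S/I`. -/
noncomputable def depthQ (k V : Type) [Field k] (I : Ideal (MvPolynomial V k)) : ℕ :=
  polyDepth k V (MvPolynomial V k ⧸ I)

/-- The edge ideal of a simple graph `G`: generated by the `X i * X j` over edges `{i,j}`. -/
noncomputable def edgeIdeal (k : Type) [Field k] {V : Type} (G : SimpleGraph V) :
    Ideal (MvPolynomial V k) :=
  Ideal.span {m | ∃ i j, G.Adj i j ∧ m = X i * X j}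

/-- The `s`-th symbolic power of an ideal: the intersection of the `s`-th powers of its
minimal primes. -/
noncomputable def symbolicPower {R : Type} [CommRing R] (I : Ideal R) (s : ℕ) : Ideal R :=
  ⨅ p ∈ I.minimalPrimes, p ^ s

/-!
The minimal primes of `I(K_n)` are the ideals `pᵢ = (x_j : j ≠ i)`, so `I(K_n)^{(n)} = ⋂ pᵢⁿ`,
and the colon can be computed prime by prime. Every monomial of `pᵢⁿ` has degree at least `n`
in the variables other than `x_i`, while `x_1 ⋯ x_n` contributes only `n - 1` of them; hence
`f · x_1 ⋯ x_n ∈ pᵢⁿ` forces `f ∈ pᵢ`. Conversely `pᵢ · x_1 ⋯ x_n ⊆ pᵢ · pᵢⁿ⁻¹`.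
-/
theorem Ideal.minimalPrimes_iInf_of_isPrime {R ι : Type*} [CommSemiring R] [Finite ι]
    {P : ι → Ideal R} (hP : ∀ i, (P i).IsPrime) (hinj : ∀ i j, P i ≤ P j → i = j) :
    (⨅ i, P i).minimalPrimes = Set.range P := by
  have : Fintype ι := Fintype.ofFinite ι
  have exists_le : ∀ q : Ideal R, q.IsPrime → ⨅ i, P i ≤ q → ∃ i, P i ≤ q := fun q hq h => by
    obtain ⟨i, -, hi⟩ := hq.inf_le'.1 ((Finset.inf_univ_eq_iInf P).trans_le h)
    exact ⟨i, hi⟩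
  ext q
  constructor
  · rintro ⟨⟨hq, hPq⟩, hmin⟩
    obtain ⟨i, hi⟩ := exists_le q hq hPq
    exact ⟨i, le_antisymm hi (hmin ⟨hP i, iInf_le P i⟩ hi)⟩
  · rintro ⟨i, rfl⟩
    refine ⟨⟨hP i, iInf_le P i⟩, fun q ⟨hq, hPq⟩ hqi => ?_⟩
    obtain ⟨j, hj⟩ := exists_le q hq hPq
    obtain rfl := hinj j i (hj.trans hqi)
    exact hj

theorem Finsupp.degree_erase_sum_single_one {σ : Type*} [Fintype σ] (i : σ) :
    ((∑ j, single j 1 : σ →₀ ℕ).erase i).degree = Fintype.card σ - 1 := by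
  classical
  rw [← eraseAddHom_apply, map_sum, map_sum, ← Finset.add_sum_erase _ _ (Finset.mem_univ i)]
  simp only [eraseAddHom_apply, erase_single, map_zero, zero_add]
  rw [Finset.sum_congr rfl fun j hj => by rw [erase_single_ne (Finset.ne_of_mem_erase hj).symm],
    Finset.sum_congr rfl fun _ _ => degree_single _ _]
  simp [Finset.card_erase_of_mem]

namespace MvPolynomial

variable {σ R : Type*}

section CommSemiring

variable [CommSemiring R]

variable (R) in
noncomputable def idealOfVarsExcept (i : σ) : Ideal (MvPolynomial σ R) :=
  Ideal.span (X '' {i}ᶜ)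

theorem mem_idealOfVarsExcept {i : σ} {f : MvPolynomial σ R} :
    f ∈ idealOfVarsExcept R i ↔ ∀ d ∈ f.support, ∃ j ≠ i, d j ≠ 0 :=
  mem_ideal_span_X_image

theorem X_mem_idealOfVarsExcept {i j : σ} (h : j ≠ i) :
    (X j : MvPolynomial σ R) ∈ idealOfVarsExcept R i :=
  Ideal.subset_span ⟨j, h, rfl⟩

theorem X_notMem_idealOfVarsExcept [Nontrivial R] (i : σ) :
    (X i : MvPolynomial σ R) ∉ idealOfVarsExcept R i := by
  classical
  simp [mem_idealOfVarsExcept, support_X, Finsupp.single_apply]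

theorem eq_of_idealOfVarsExcept_le [Nontrivial R] {i j : σ}
    (h : idealOfVarsExcept R i ≤ idealOfVarsExcept R j) : i = j := by
  by_contra hij
  exact X_notMem_idealOfVarsExcept (R := R) j (h (X_mem_idealOfVarsExcept (Ne.symm hij)))

variable (R) in
noncomputable def awayDegreeIdeal (i : σ) (s : ℕ) : Ideal (MvPolynomial σ R) :=
  restrictSupportIdeal R {d | s ≤ (d.erase i).degree}
    fun d e (hde : d ≤ e) (hd : s ≤ (d.erase i).degree) =>
      show s ≤ (e.erase i).degree from hd.trans <| Finsupp.degree_mono fun j => by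
        classical
        simp only [Finsupp.erase_apply]
        split_ifs
        exacts [le_rfl, hde j]

theorem mem_awayDegreeIdeal {i : σ} {s : ℕ} {f : MvPolynomial σ R} :
    f ∈ awayDegreeIdeal R i s ↔ ∀ d ∈ f.support, s ≤ (d.erase i).degree := by
  rfl

theorem awayDegreeIdeal_one (i : σ) : awayDegreeIdeal R i 1 = idealOfVarsExcept R i := by
  ext f
  simp only [mem_awayDegreeIdeal, mem_idealOfVarsExcept, Nat.one_le_iff_ne_zero, ne_eq,
    Finsupp.degree_eq_zero_iff, Finsupp.ext_iff, Finsupp.coe_zero, Pi.zero_apply, not_forall]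
  refine forall₂_congr fun d _ => ⟨fun ⟨j, hj⟩ => ?_, fun ⟨j, hji, hj⟩ => ⟨j, ?_⟩⟩
  · obtain rfl | hji := eq_or_ne j i
    · exact absurd Finsupp.erase_same hj
    · exact ⟨j, hji, by rwa [Finsupp.erase_ne hji] at hj⟩
  · rwa [Finsupp.erase_ne hji]

theorem awayDegreeIdeal_mul_le (i : σ) (a b : ℕ) :
    awayDegreeIdeal R i a * awayDegreeIdeal R i b ≤ awayDegreeIdeal R i (a + b) := by
  classical
  refine Ideal.mul_le.2 fun f hf g hg => mem_awayDegreeIdeal.2 fun d hd => ?_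
  obtain ⟨u, hu, v, hv, rfl⟩ := Finset.mem_add.1 (support_mul f g hd)
  rw [Finsupp.erase_add, map_add]
  exact add_le_add (mem_awayDegreeIdeal.1 hf u hu) (mem_awayDegreeIdeal.1 hg v hv)

theorem idealOfVarsExcept_pow_le (i : σ) (s : ℕ) :
    idealOfVarsExcept R i ^ s ≤ awayDegreeIdeal R i s := by
  induction s with
  | zero => exact fun f _ => mem_awayDegreeIdeal.2 fun d _ => Nat.zero_le _
  | succ s ih =>
    rw [pow_succ]
    exact (Ideal.mul_mono ih (awayDegreeIdeal_one i).ge).trans (awayDegreeIdeal_mul_le i s 1)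

theorem mem_awayDegreeIdeal_of_mul_monomial_mem {i : σ} {s : ℕ} {f : MvPolynomial σ R}
    {m : σ →₀ ℕ} (h : f * monomial m 1 ∈ awayDegreeIdeal R i (s + (m.erase i).degree)) :
    f ∈ awayDegreeIdeal R i s := by
  refine mem_awayDegreeIdeal.2 fun d hd => ?_
  have hdm : d + m ∈ (f * monomial m 1).support := by
    rwa [mem_support_iff, coeff_mul_monomial, mul_one, ← mem_support_iff]
  have := mem_awayDegreeIdeal.1 h _ hdm
  rw [Finsupp.erase_add, map_add] at this
  omega

theorem prod_X_mem_idealOfVarsExcept_pow [Fintype σ] (i : σ) :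
    (∏ j, X j : MvPolynomial σ R) ∈ idealOfVarsExcept R i ^ (Fintype.card σ - 1) := by
  classical
  rw [← Finset.mul_prod_erase _ _ (Finset.mem_univ i), ← Finset.card_univ,
    ← Finset.card_erase_of_mem (Finset.mem_univ i), ← Finset.prod_const]
  exact Ideal.mul_mem_left _ _
    (Ideal.prod_mem_prod fun j hj => X_mem_idealOfVarsExcept (Finset.ne_of_mem_erase hj))

theorem idealOfVarsExcept_pow_card_colon_prod_X [Fintype σ] (i : σ) :
    (idealOfVarsExcept R i ^ Fintype.card σ).colon (Ideal.span {(∏ j, X j : MvPolynomial σ R)}) =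
      idealOfVarsExcept R i := by
  have hcard : Fintype.card σ = 1 + (Fintype.card σ - 1) := by
    have := Fintype.card_pos_iff.2 ⟨i⟩
    omega
  ext f
  rw [Ideal.mem_colon_span_singleton]
  constructor
  · intro hf
    have hprod : (∏ j, X j : MvPolynomial σ R) = monomial (∑ j, Finsupp.single j 1) 1 :=
      (monomial_sum_one _ _).symm
    have hf' := idealOfVarsExcept_pow_le i _ hf
    rw [hprod, hcard, ← Finsupp.degree_erase_sum_single_one i] at hf'
    rw [← awayDegreeIdeal_one]
    exact mem_awayDegreeIdeal_of_mul_monomial_mem hf'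
  · intro hf
    rw [hcard, pow_add, pow_one]
    exact Ideal.mul_mem_mul hf (prod_X_mem_idealOfVarsExcept_pow i)

end CommSemiring

theorem isPrime_idealOfVarsExcept [CommRing R] [IsDomain R] (i : σ) :
    (idealOfVarsExcept R i).IsPrime := by
  classical
  let φ : MvPolynomial σ R →ₐ[R] MvPolynomial σ R := aeval fun j => if j = i then X i else 0
  -- modulo `idealOfVarsExcept R i`, `φ` is the identity
  have hφ : (Ideal.Quotient.mkₐ R (idealOfVarsExcept R i)).comp φ =
      Ideal.Quotient.mkₐ R (idealOfVarsExcept R i) := by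
    refine algHom_ext fun j => ?_
    by_cases hj : j = i
    · simp [φ, hj]
    · simp [φ, hj, Ideal.Quotient.eq_zero_iff_mem.2 (X_mem_idealOfVarsExcept (R := R) hj)]
  suffices RingHom.ker φ = idealOfVarsExcept R i from this ▸ RingHom.ker_isPrime φ
  refine le_antisymm (fun f hf => ?_) (Ideal.span_le.2 ?_)
  · rw [← Ideal.Quotient.eq_zero_iff_mem, ← Ideal.Quotient.mkₐ_eq_mk R, ← hφ]
    simp [(RingHom.mem_ker).1 hf]
  · rintro _ ⟨j, hj, rfl⟩
    simp_all [φ]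

end MvPolynomial

theorem mem_edgeIdeal_iff {k V : Type} [Field k] {G : SimpleGraph V} {f : MvPolynomial V k} :
    f ∈ edgeIdeal k G ↔ ∀ d ∈ f.support, ∃ a b, G.Adj a b ∧ d a ≠ 0 ∧ d b ≠ 0 := by
  classical
  have hgen : {m | ∃ a b, G.Adj a b ∧ m = (X a * X b : MvPolynomial V k)} =
      (monomial · 1) '' {d | ∃ a b, G.Adj a b ∧ d = Finsupp.single a 1 + Finsupp.single b 1} := by
    ext m
    constructor
    · rintro ⟨a, b, hab, rfl⟩
      exact ⟨_, ⟨a, b, hab, rfl⟩, by simp [X, monomial_mul]⟩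
    · rintro ⟨_, ⟨a, b, hab, rfl⟩, rfl⟩
      exact ⟨a, b, hab, by simp [X, monomial_mul]⟩
  rw [edgeIdeal, hgen, mem_ideal_span_monomial_image]
  refine forall₂_congr fun d _ => ⟨?_, ?_⟩
  · rintro ⟨_, ⟨a, b, hab, rfl⟩, hle⟩
    exact ⟨a, b, hab, by simpa [hab.ne, ← Nat.one_le_iff_ne_zero] using hle a,
      by simpa [hab.ne.symm, ← Nat.one_le_iff_ne_zero] using hle b⟩
  · rintro ⟨a, b, hab, ha, hb⟩
    refine ⟨_, ⟨a, b, hab, rfl⟩, fun j => ?_⟩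
    simp only [Finsupp.add_apply, Finsupp.single_apply]
    have := hab.ne
    split_ifs <;> grind

theorem edgeIdeal_top_eq_iInf_idealOfVarsExcept {k V : Type} [Field k] [Nonempty V] :
    edgeIdeal k (⊤ : SimpleGraph V) = ⨅ i, idealOfVarsExcept k i := by
  ext f
  simp only [Submodule.mem_iInf, mem_edgeIdeal_iff, mem_idealOfVarsExcept,
    SimpleGraph.top_adj]
  refine ⟨fun h i d hd => ?_, fun h d hd => ?_⟩
  · obtain ⟨a, b, hab, ha, hb⟩ := h d hd
    obtain rfl | hai := eq_or_ne a i
    · exact ⟨b, hab.symm, hb⟩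
    · exact ⟨a, hai, ha⟩
  · obtain ⟨a, -, ha⟩ := h (Classical.arbitrary V) d hd
    obtain ⟨b, hba, hb⟩ := h a d hd
    exact ⟨a, b, hba.symm, ha, hb⟩

theorem minimalPrimes_edgeIdeal_top {k V : Type} [Field k] [Nonempty V] [Finite V] :
    (edgeIdeal k (⊤ : SimpleGraph V)).minimalPrimes = Set.range (idealOfVarsExcept k) := by
  rw [edgeIdeal_top_eq_iInf_idealOfVarsExcept]
  exact Ideal.minimalPrimes_iInf_of_isPrime isPrime_idealOfVarsExcept
    fun _ _ => eq_of_idealOfVarsExcept_le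

/-- For the complete graph `K_n` (`n ≥ 2`), `I(K_n)^{(n)} : (x_1 ⋯ x_n) = I(K_n)`. -/
theorem stmt4 (k : Type) [Field k] (n : ℕ) (hn : 2 ≤ n) :
    (symbolicPower (edgeIdeal k (⊤ : SimpleGraph (Fin n))) n).colon
        (Ideal.span {∏ i : Fin n, (X i : MvPolynomial (Fin n) k)}) =
      edgeIdeal k (⊤ : SimpleGraph (Fin n)) := by
  have : Nonempty (Fin n) := ⟨⟨0, by omega⟩⟩
  rw [symbolicPower, minimalPrimes_edgeIdeal_top, iInf_range, Submodule.iInf_colon,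
    edgeIdeal_top_eq_iInf_idealOfVarsExcept]
  refine iInf_congr fun i => ?_
  simpa using idealOfVarsExcept_pow_card_colon_prod_X (R := k) i
end

section
/- Let G be a simple graph with edge ideal I(G), and let e = x_i x_j be a leaf edge of G (i.e., one of i, j has degree 1 in G). Then for all s ≥ 2, I(G)^{(s)} : e = I(G)^{(s-1)}. -/
open MvPolynomial

/-!
The minimal primes of `I(G)` are the ideals `P_C = (x_v : v ∈ C)` of the minimal vertex covers `C`,
so the colon ideal can be computed one minimal prime at a time. Since `j` is a leaf, every minimal
cover contains exactly one of `i`, `j`. Grading by the number of variables from `C` in a monomial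
(the weight `C.indicator 1`), `P_C ^ s` consists of the polynomials all of whose monomials have
`C`-degree at least `s`; multiplying by `x_v` raises that degree by one when `v ∈ C` and keeps it
otherwise, so `P_C ^ s : x_i x_j = P_C ^ (s - 1)`.
-/

open Finsupp

namespace MvPolynomial

variable {σ R : Type*}

section CommSemiring

variable [CommSemiring R] {C : Set σ}

lemma one_le_weight_indicator_iff {m : σ →₀ ℕ} :
    1 ≤ weight (C.indicator 1) m ↔ ∃ v ∈ C, m v ≠ 0 := by
  refine ⟨fun h => ?_, fun ⟨v, hv, hmv⟩ => ?_⟩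
  · by_contra! hC
    have : weight (C.indicator 1) m = 0 :=
      Finset.sum_eq_zero fun v _ => by by_cases hv : v ∈ C <;> simp [hv, hC]
    omega
  · simpa [hv] using le_weight_of_ne_zero' (C.indicator 1 : σ → ℕ) hmv

lemma isUpperSet_setOf_le_weight (w : σ → ℕ) (t : ℕ) :
    IsUpperSet {m : σ →₀ ℕ | t ≤ weight w m} := by
  intro a b hab ha
  obtain ⟨d, rfl⟩ := le_iff_exists_add.mp hab
  simp only [Set.mem_ofPred_eq, map_add] at ha ⊢
  omega

lemma pow_span_X_image_le_restrictSupportIdeal (t : ℕ) :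
    Ideal.span (X '' C) ^ t ≤
      restrictSupportIdeal R _ (isUpperSet_setOf_le_weight (C.indicator 1) t) := by
  classical
  induction t with
  | zero => intro f _ m _; exact Nat.zero_le _
  | succ t ih =>
    rw [pow_succ, Ideal.mul_le]
    intro a ha b hb m hm
    obtain ⟨ma, hma, mb, hmb, rfl⟩ := Finset.mem_add.mp (support_mul a b hm)
    have hwa : t ≤ weight (C.indicator 1) ma := ih ha hma
    have hwb : 1 ≤ weight (C.indicator 1) mb :=
      one_le_weight_indicator_iff.mpr (mem_ideal_span_X_image.mp hb mb hmb)
    simp only [Set.mem_ofPred_eq, map_add]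
    omega

lemma monomial_mem_pow_span_X_image {t : ℕ} {m : σ →₀ ℕ} (c : R)
    (hm : t ≤ weight (C.indicator 1) m) : monomial m c ∈ Ideal.span (X '' C) ^ t := by
  induction t generalizing m with
  | zero => simp
  | succ t ih =>
    obtain ⟨v, hvC, hmv⟩ := one_le_weight_indicator_iff.mp (le_of_add_le_right hm)
    have hw := weight_sub_single_add (w := (C.indicator 1 : σ → ℕ)) hmv
    rw [Set.indicator_of_mem hvC, Pi.one_apply] at hw
    rw [← sub_add_single_one_cancel hmv, monomial_add_single, pow_one, pow_succ]
    exact Ideal.mul_mem_mul (ih (by omega)) (Ideal.subset_span ⟨v, hvC, rfl⟩)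

theorem pow_span_X_image_eq_restrictSupportIdeal (t : ℕ) :
    Ideal.span (X '' C) ^ t =
      restrictSupportIdeal R _ (isUpperSet_setOf_le_weight (C.indicator 1) t) := by
  refine le_antisymm (pow_span_X_image_le_restrictSupportIdeal t) fun f hf => ?_
  rw [f.as_sum]
  exact Ideal.sum_mem _ fun m hm => monomial_mem_pow_span_X_image _ (hf hm)

theorem mem_pow_span_X_image_iff {t : ℕ} {f : MvPolynomial σ R} :
    f ∈ Ideal.span (X '' C) ^ t ↔ ∀ m ∈ f.support, t ≤ weight (C.indicator 1) m := by
  rw [pow_span_X_image_eq_restrictSupportIdeal]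
  exact Iff.rfl

lemma mul_X_mem_pow_span_X_image_iff {t : ℕ} {v : σ} {f : MvPolynomial σ R} :
    f * X v ∈ Ideal.span (X '' C) ^ t ↔
      ∀ m ∈ f.support, t ≤ weight (C.indicator 1) m + (C.indicator 1 v : ℕ) := by
  simp [mem_pow_span_X_image_iff, support_mul_X, weight_single]

lemma mul_X_mem_pow_span_X_image_iff_of_mem {t : ℕ} {v : σ} (hv : v ∈ C)
    {f : MvPolynomial σ R} :
    f * X v ∈ Ideal.span (X '' C) ^ t ↔ f ∈ Ideal.span (X '' C) ^ (t - 1) := by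
  rw [mul_X_mem_pow_span_X_image_iff, mem_pow_span_X_image_iff, Set.indicator_of_mem hv,
    Pi.one_apply]
  exact forall₂_congr fun _ _ => by omega

lemma mul_X_mem_pow_span_X_image_iff_of_notMem {t : ℕ} {v : σ} (hv : v ∉ C)
    {f : MvPolynomial σ R} :
    f * X v ∈ Ideal.span (X '' C) ^ t ↔ f ∈ Ideal.span (X '' C) ^ t := by
  rw [mul_X_mem_pow_span_X_image_iff, mem_pow_span_X_image_iff, Set.indicator_of_notMem hv]
  simp only [add_zero]

theorem colon_span_X_mul_X_pow_span_X_image {i j : σ} (hi : i ∈ C) (hj : j ∉ C) (t : ℕ) :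
    (Ideal.span (X '' C) ^ t : Ideal (MvPolynomial σ R)).colon
        (Ideal.span {(X i * X j : MvPolynomial σ R)}) =
      Ideal.span (X '' C) ^ (t - 1) := by
  ext f
  rw [Ideal.mem_colon_span_singleton, ← mul_assoc, mul_X_mem_pow_span_X_image_iff_of_notMem hj,
    mul_X_mem_pow_span_X_image_iff_of_mem hi]

lemma X_mem_span_X_image_iff [Nontrivial R] {v : σ} :
    (X v : MvPolynomial σ R) ∈ Ideal.span (X '' C) ↔ v ∈ C := by
  simp [mem_ideal_span_X_image, support_X, Finsupp.single_apply_ne_zero]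

end CommSemiring

theorem isPrime_span_X_image [CommRing R] [IsDomain R] (C : Set σ) :
    (Ideal.span (X '' C) : Ideal (MvPolynomial σ R)).IsPrime := by
  classical
  let π : MvPolynomial σ R →ₐ[R] MvPolynomial σ R := aeval fun v => if v ∈ C then 0 else X v
  have hπ (f : MvPolynomial σ R) : f - π f ∈ Ideal.span (X '' C) := by
    induction f using MvPolynomial.induction_on with
    | C a => simp [π]
    | add p q hp hq => simpa [π, add_sub_add_comm] using add_mem hp hq
    | mul_X p v hp =>
      by_cases hv : v ∈ C
      · simpa [π, hv] using Ideal.mul_mem_left _ p (Ideal.subset_span (Set.mem_image_of_mem X hv))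
      · simpa [π, hv, sub_mul] using Ideal.mul_mem_right (X v) _ hp
  suffices Ideal.span (X '' C) = RingHom.ker π from this ▸ RingHom.ker_isPrime π
  refine le_antisymm ?_ fun f hf => by simpa [RingHom.mem_ker.mp hf] using hπ f
  rw [Ideal.span_le]
  rintro _ ⟨v, hv, rfl⟩
  simp [π, hv]

end MvPolynomial

theorem SimpleGraph.IsVertexCover.diff_singleton {V : Type*} {G : SimpleGraph V} {c : Set V}
    {j : V} (hc : G.IsVertexCover c) (hj : G.neighborSet j ⊆ c) :
    G.IsVertexCover (c \ {j}) := by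
  intro a b hab
  have ha : a = j → b ∈ c := fun h => hj (h ▸ hab)
  have hb : b = j → a ∈ c := fun h => hj (h ▸ hab.symm)
  have := hab.ne
  grind [hc hab]

section EdgeIdeal

variable {k V : Type} [Field k] {G : SimpleGraph V} {p : Ideal (MvPolynomial V k)}

lemma edgeIdeal_le_span_X_image {c : Set V} (hc : G.IsVertexCover c) :
    edgeIdeal k G ≤ Ideal.span (X '' c) := by
  rw [edgeIdeal, Ideal.span_le]
  rintro _ ⟨a, b, hab, rfl⟩
  rcases hc hab with ha | hb
  · exact Ideal.mul_mem_right _ _ (Ideal.subset_span ⟨a, ha, rfl⟩)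
  · exact Ideal.mul_mem_left _ _ (Ideal.subset_span ⟨b, hb, rfl⟩)

lemma isVertexCover_setOf_X_mem (hp : p.IsPrime) (hGp : edgeIdeal k G ≤ p) :
    G.IsVertexCover {v | X v ∈ p} :=
  fun a b hab => hp.mem_or_mem (hGp (Ideal.subset_span ⟨a, b, hab, rfl⟩))

lemma le_span_X_image_of_mem_minimalPrimes (hp : p ∈ (edgeIdeal k G).minimalPrimes)
    {c : Set V} (hc : G.IsVertexCover c) (hcp : c ⊆ {v | X v ∈ p}) :
    p ≤ Ideal.span (X '' c) :=
  hp.2 ⟨isPrime_span_X_image c, edgeIdeal_le_span_X_image hc⟩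
    (Ideal.span_le.mpr (Set.image_subset_iff.mpr hcp))

theorem eq_span_X_image_of_mem_minimalPrimes (hp : p ∈ (edgeIdeal k G).minimalPrimes) :
    p = Ideal.span (X '' {v | X v ∈ p}) :=
  le_antisymm
    (le_span_X_image_of_mem_minimalPrimes hp (isVertexCover_setOf_X_mem hp.1.1 hp.1.2) le_rfl)
    (Ideal.span_le.mpr (Set.image_subset_iff.mpr le_rfl))

theorem X_mem_iff_X_notMem_of_neighborSet_eq (hp : p ∈ (edgeIdeal k G).minimalPrimes) {i j : V}
    (hleaf : G.neighborSet j = {i}) : X j ∈ p ↔ X i ∉ p := by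
  have hadj : G.Adj i j := G.adj_symm (by simp [← SimpleGraph.mem_neighborSet, hleaf])
  have hedge : X i * X j ∈ p := hp.1.2 (Ideal.subset_span ⟨i, j, hadj, rfl⟩)
  refine ⟨fun hj hi => ?_, (hp.1.1.mem_or_mem hedge).resolve_left⟩
  have hcover := (isVertexCover_setOf_X_mem hp.1.1 hp.1.2).diff_singleton (j := j)
    (by simpa [hleaf] using hi)
  have := le_span_X_image_of_mem_minimalPrimes hp hcover Set.sdiff_subset hj
  simp [X_mem_span_X_image_iff] at this

end EdgeIdeal

theorem stmt5_general (k : Type) [Field k] (n : ℕ) (G : SimpleGraph (Fin n)) (i j : Fin n)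
    (hleaf : G.neighborSet j = {i}) (s : ℕ) :
    (symbolicPower (edgeIdeal k G) s).colon
        (Ideal.span {(X i * X j : MvPolynomial (Fin n) k)}) =
      symbolicPower (edgeIdeal k G) (s - 1) := by
  simp only [symbolicPower, Submodule.iInf_colon]
  refine iInf_congr fun p => iInf_congr fun hp => ?_
  obtain ⟨C, hpC, hij⟩ : ∃ C : Set (Fin n), p = Ideal.span (X '' C) ∧ (j ∈ C ↔ i ∉ C) :=
    ⟨_, eq_span_X_image_of_mem_minimalPrimes hp, X_mem_iff_X_notMem_of_neighborSet_eq hp hleaf⟩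
  rw [hpC]
  by_cases hi : i ∈ C
  · exact colon_span_X_mul_X_pow_span_X_image hi (fun hj => hij.mp hj hi) s
  · rw [mul_comm (X i)]
    exact colon_span_X_mul_X_pow_span_X_image (hij.mpr hi) hi s

/-- If `e = x_i * x_j` is a leaf edge of `G` (the vertex `j` has `i` as its only neighbour),
then for all `s ≥ 2`, `I(G)^{(s)} : e = I(G)^{(s-1)}`. -/
theorem stmt5 (k : Type) [Field k] (n : ℕ) (G : SimpleGraph (Fin n)) (i j : Fin n)
    (hleaf : G.neighborSet j = {i}) (s : ℕ) (hs : 2 ≤ s) :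
    (symbolicPower (edgeIdeal k G) s).colon
        (Ideal.span {(X i * X j : MvPolynomial (Fin n) k)}) =
      symbolicPower (edgeIdeal k G) (s - 1) :=
  stmt5_general k n G i j hleaf s
end

section
/- Let Δ be the simplicial complex on vertex set {x_1,...,x_n} ∪ {y_{i,ℓ}} whose facets are F_i = {x_i} ∪ {y_{j,ℓ} : j ≠ i, 1 ≤ ℓ ≤ a_j} for i = 1,...,n, where all a_i ≥ 1 and n ≥ 2. Then the reduced homology H̃_{n−2}(Δ; k) is nonzero. -/
/-- The space of (reduced, ordered) simplicial `q`-chains with coefficients in `k`: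
the free `k`-module on the faces with exactly `q` vertices (so `q = 0` corresponds to the
empty face, giving reduced homology). -/
abbrev Chains (k V : Type) [Field k] (isFace : Finset V → Prop) (q : ℕ) : Type :=
  {F : Finset V // isFace F ∧ F.card = q} →₀ k

/-- The simplicial boundary map, with the usual alternating signs determined by a linear
order on the vertices. -/
noncomputable def boundary (k V : Type) [Field k] [LinearOrder V] [DecidableEq V] (isFace : Finset V → Prop)
    (hdc : ∀ F : Finset V, ∀ v : V, isFace F → isFace (F.erase v)) (q : ℕ) :
    Chains k V isFace (q + 1) →ₗ[k] Chains k V isFace q :=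
  Finsupp.lsum k fun F =>
    LinearMap.toSpanSingleton k _
      (∑ v ∈ F.1.attach, ((-1 : k) ^ (F.1.filter (· < v.1)).card) •
        Finsupp.single
          (⟨F.1.erase v.1, hdc F.1 v.1 F.2.1, by
            simp [Finset.card_erase_of_mem v.2, F.2.2]⟩ :
            {F : Finset V // isFace F ∧ F.card = q})
          (1 : k))

/-- The faces of the simplicial complex `Δ` whose facets are
`F_i = {x_i} ∪ {y_{j,ℓ} : j ≠ i}`. -/
def deltaFace (n : ℕ) (a : Fin n → ℕ) (F : Finset (Fin n ⊕ Σ i : Fin n, Fin (a i))) : Prop :=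
  ∃ i : Fin n, (F : Set (Fin n ⊕ Σ i : Fin n, Fin (a i))) ⊆
    {Sum.inl i} ∪ Sum.inr '' {p : Σ i : Fin n, Fin (a i) | p.1 ≠ i}

theorem deltaFace_downClosed (n : ℕ) (a : Fin n → ℕ) :
    ∀ F : Finset (Fin n ⊕ Σ i : Fin n, Fin (a i)), ∀ v, deltaFace n a F →
      deltaFace n a (F.erase v) := by
  rintro F v ⟨i, hi⟩
  exact ⟨i, (Finset.coe_subset.mpr (Finset.erase_subset v F)).trans hi⟩


/-! Colour the vertices by `Fin n`: `y_{j,ℓ}` gets colour `j` and `x_i` gets `i + 1 (mod n)`.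
Every facet `F_i` misses colour `i`, so no face with `n` vertices is rainbow and the colouring is
a simplicial map from `Δ` to the boundary of the simplex on `Fin n`. The transversal
`Y = {y_{1,1}, …, y_{n,1}}` is rainbow and not a face, but all its facets are faces, so its formal
boundary is an `(n-2)`-cycle of `Δ`. Pulling back the cochain dual to one facet of the sphere gives
a cocycle of `Δ` (its coboundary would only see rainbow faces with `n` vertices) that takes the
value `±1` on that cycle, so the cycle is not a boundary. -/

open Finset

section Injectivity

variable {V C : Type*} [DecidableEq V] [DecidableEq C]

lemma exists_ne_apply_eq_of_not_injOn {D : V → C} {G : Finset V} {v : V}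
    (hinj : Set.InjOn D (G.erase v)) (hG : ¬ Set.InjOn D G) : ∃ w ∈ G, w ≠ v ∧ D w = D v := by
  by_contra! h
  refine hG fun x hx y hy hxy => ?_
  by_cases hxv : x = v <;> by_cases hyv : y = v
  · rw [hxv, hyv]
  · exact absurd (hxv ▸ hxy.symm) (h y hy hyv)
  · exact absurd (hyv ▸ hxy) (h x hx hxv)
  · exact hinj (by simp [hxv, hx]) (by simp [hyv, hy]) hxy

lemma image_erase_of_apply_eq {D : V → C} {G : Finset V} {v w : V} (hw : w ∈ G) (hwv : w ≠ v)
    (hd : D w = D v) : (G.erase v).image D = G.image D := by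
  ext c
  simp only [mem_image, mem_erase]
  grind

end Injectivity

section Signs

variable {V C : Type*} [LinearOrder V] [DecidableEq V] [LinearOrder C]

def numBelow (S : Finset V) (v : V) : ℕ := #{w ∈ S | w < v}

def inversions (D : V → C) (F : Finset V) : ℕ := ∑ t ∈ F, #{s ∈ F | s < t ∧ D t < D s}

lemma neg_one_pow_eq_neg_of_mod_two {R : Type*} [Ring R] {m m' : ℕ} (h : m % 2 = (m' + 1) % 2) :
    (-1 : R) ^ m = -(-1) ^ m' := by
  rw [neg_one_pow_eq_pow_mod_two, h, ← neg_one_pow_eq_pow_mod_two, pow_succ, mul_neg_one]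

lemma numBelow_erase {S : Finset V} {u : V} (hu : u ∈ S) (w : V) :
    numBelow (S.erase u) w + (if u < w then 1 else 0) = numBelow S w := by
  rw [numBelow, numBelow, filter_erase]
  split_ifs with h
  · rw [card_erase_add_one (mem_filter.mpr ⟨hu, h⟩)]
  · rw [erase_eq_of_notMem (by simp [h]), add_zero]

lemma neg_one_pow_numBelow_add_numBelow_erase {R : Type*} [Ring R] {S : Finset V} {u w : V}
    (hu : u ∈ S) (hw : w ∈ S) (hne : u ≠ w) :
    (-1 : R) ^ (numBelow S u + numBelow (S.erase u) w)
      = -(-1) ^ (numBelow S w + numBelow (S.erase w) u) := by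
  apply neg_one_pow_eq_neg_of_mod_two
  have h₁ := numBelow_erase hu w
  have h₂ := numBelow_erase hw u
  rcases hne.lt_or_gt with h | h <;> simp only [h, h.not_gt, if_true, if_false] at h₁ h₂ <;> omega

lemma inversions_erase (D : V → C) {F : Finset V} {x : V} (hx : x ∈ F) :
    inversions D F = inversions D (F.erase x)
      + #{s ∈ F | s < x ∧ D x < D s} + #{t ∈ F | x < t ∧ D t < D x} := by
  have h1 : ∀ t ∈ F.erase x, #{s ∈ F | s < t ∧ D t < D s}
      = #{s ∈ F.erase x | s < t ∧ D t < D s} + if x < t ∧ D t < D x then 1 else 0 := by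
    intro t _
    rw [filter_erase]
    split_ifs with h
    · rw [card_erase_add_one (mem_filter.mpr ⟨hx, h⟩)]
    · rw [erase_eq_of_notMem (by simp [h]), add_zero]
  have h2 : #{t ∈ F.erase x | x < t ∧ D t < D x} = #{t ∈ F | x < t ∧ D t < D x} := by
    rw [filter_erase, erase_eq_of_notMem (by simp)]
  rw [inversions, ← add_sum_erase F _ hx, sum_congr rfl h1, sum_add_distrib, ← card_filter, h2,
    inversions]
  ring

-- Stated without subtraction; only its parity is used.
lemma numBelow_add_inversions_erase (D : V → C) {G : Finset V} {x : V} (hx : x ∈ G) :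
    numBelow G x + inversions D (G.erase x) + 2 * #{t ∈ G | x < t ∧ D t < D x}
      = inversions D G + #{t ∈ G | D t < D x} + #{t ∈ G | t < x ∧ D t = D x} := by
  have hbelow : numBelow G x = #{t ∈ G | t < x ∧ D t < D x} + #{t ∈ G | t < x ∧ D x < D t}
      + #{t ∈ G | t < x ∧ D t = D x} := by
    simp only [numBelow, card_filter, ← sum_add_distrib]
    refine sum_congr rfl fun t _ => ?_
    grind
  have hsmaller : #{t ∈ G | D t < D x}
      = #{t ∈ G | t < x ∧ D t < D x} + #{t ∈ G | x < t ∧ D t < D x} := by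
    simp only [card_filter, ← sum_add_distrib]
    refine sum_congr rfl fun t _ => ?_
    grind
  have := inversions_erase D hx
  omega

omit [DecidableEq V] in
lemma card_filter_lt_colour_eq {D : V → C} {G : Finset V} {u w : V} (hw : w ∈ G)
    (hd : D u = D w) (honly : ∀ t ∈ G, D t = D u → t = u ∨ t = w) :
    #{t ∈ G | t < u ∧ D t = D u} = if w < u then 1 else 0 := by
  have : {t ∈ G | t < u ∧ D t = D u} = if w < u then {w} else ∅ := by
    ext t
    have := honly t
    split_ifs <;> simp <;> grind
  split_ifs at this ⊢ <;> simp [this]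

lemma neg_one_pow_numBelow_add_inversions_erase {R : Type*} [Ring R] (D : V → C) {G : Finset V}
    {u w : V} (hu : u ∈ G) (hw : w ∈ G) (hne : u ≠ w) (hd : D u = D w)
    (honly : ∀ t ∈ G, D t = D u → t = u ∨ t = w) :
    (-1 : R) ^ (numBelow G u + inversions D (G.erase u))
      = -(-1) ^ (numBelow G w + inversions D (G.erase w)) := by
  have eu := card_filter_lt_colour_eq hw hd honly
  have ew := card_filter_lt_colour_eq hu hd.symm
    fun t ht h => (honly t ht (h.trans hd.symm)).symm
  have su := numBelow_add_inversions_erase D hu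
  have sw := numBelow_add_inversions_erase D hw
  rw [← hd] at sw ew
  apply neg_one_pow_eq_neg_of_mod_two
  rcases hne.lt_or_gt with h | h <;> simp only [h, h.not_gt, if_true, if_false] at eu ew <;> omega

variable (R : Type*) [Ring R]

-- `(-1) ^ inversions D F` is the sign of `D : F → T` relative to the orders on `V` and `C`.
noncomputable def colourSign (D : V → C) (T : Finset C) (F : Finset V) : R :=
  if F.image D = T then (-1) ^ inversions D F else 0

variable {R}

-- If `G.erase v` is rainbow, `v` and one other `w` are the only colour collision in `G`:
-- the two terms for `v` and `w` cancel and all others vanish.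
lemma sum_colourSign_erase_eq_zero {D : V → C} {T : Finset C} {G : Finset V} (hT : #T + 1 = #G)
    (hG : ¬ Set.InjOn D G) :
    ∑ v ∈ G, (-1 : R) ^ numBelow G v * colourSign R D T (G.erase v) = 0 := by
  by_cases hex : ∃ v ∈ G, (G.erase v).image D = T
  swap
  · push Not at hex
    exact sum_eq_zero fun v hv => by rw [colourSign, if_neg (hex v hv), mul_zero]
  obtain ⟨v, hv, hvT⟩ := hex
  have hinj : Set.InjOn D (G.erase v) :=
    card_image_iff.mp (by rw [hvT, card_erase_of_mem hv]; omega)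
  obtain ⟨w, hw, hwv, hd⟩ := exists_ne_apply_eq_of_not_injOn hinj hG
  have honly : ∀ t ∈ G, D t = D v → t = v ∨ t = w := fun t ht htd => by
    by_contra! h
    exact h.2 (hinj (by simp [h.1, ht]) (by simp [hwv, hw]) (htd.trans hd.symm))
  have hwT : (G.erase w).image D = T := by
    rw [← hvT, image_erase_of_apply_eq hw hwv hd, image_erase_of_apply_eq hv hwv.symm hd.symm]
  have hzero : ∀ t ∈ G, t ∉ ({v, w} : Finset V) → colourSign R D T (G.erase t) = 0 := by
    intro t ht htvw
    rw [colourSign, if_neg]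
    intro htT
    have hinjt : Set.InjOn D (G.erase t) :=
      card_image_iff.mp (by rw [htT, card_erase_of_mem ht]; omega)
    exact hwv (hinjt (by grind) (by grind) hd)
  rw [← sum_subset (show {v, w} ⊆ G by grind) fun t ht htvw => by rw [hzero t ht htvw, mul_zero],
    sum_pair hwv.symm, colourSign, if_pos hvT, colourSign, if_pos hwT, ← pow_add, ← pow_add,
    neg_one_pow_numBelow_add_inversions_erase D hv hw hwv.symm hd.symm honly, neg_add_cancel]

lemma sum_colourSign_erase_ne_zero [Nontrivial R] {D : V → C} {S : Finset V}
    (hS : Set.InjOn D S) {v₀ : V} (hv₀ : v₀ ∈ S) :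
    ∑ v ∈ S, (-1 : R) ^ numBelow S v * colourSign R D ((S.erase v₀).image D) (S.erase v) ≠ 0 := by
  have hoff : ∀ v ∈ S, v ≠ v₀ → (S.erase v).image D ≠ (S.erase v₀).image D := by
    intro v hv hne himg
    have : D v₀ ∈ (S.erase v₀).image D := himg ▸ mem_image_of_mem D (by simp [hne.symm, hv₀])
    obtain ⟨x, hx, hxv⟩ := mem_image.mp this
    exact (mem_erase.mp hx).1 (hS (mem_erase.mp hx).2 hv₀ hxv)
  rw [sum_eq_single v₀ (fun v hv hne => by rw [colourSign, if_neg (hoff v hv hne), mul_zero])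
    (absurd hv₀), colourSign, if_pos rfl, ← pow_add]
  exact (isUnit_one.neg.pow _).ne_zero

end Signs

section Chains

variable {k V : Type} [Field k] [LinearOrder V] [DecidableEq V] {isFace : Finset V → Prop}

variable (k isFace) in
open Classical in
noncomputable def faceChain (q : ℕ) (F : Finset V) : Chains k V isFace q :=
  if h : isFace F ∧ #F = q then Finsupp.single ⟨F, h⟩ 1 else 0

variable (k isFace) in
noncomputable def formalBoundary (q : ℕ) (S : Finset V) : Chains k V isFace q :=
  ∑ v ∈ S, (-1 : k) ^ numBelow S v • faceChain k isFace q (S.erase v)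

lemma boundary_faceChain (hdc : ∀ F : Finset V, ∀ v : V, isFace F → isFace (F.erase v)) {q : ℕ}
    {F : Finset V} (hF : isFace F) (hc : #F = q + 1) :
    boundary k V isFace hdc q (faceChain k isFace (q + 1) F) = formalBoundary k isFace q F := by
  rw [formalBoundary, faceChain, dif_pos ⟨hF, hc⟩, boundary, Finsupp.lsum_single,
    LinearMap.toSpanSingleton_apply, one_smul, ← sum_attach F]
  refine sum_congr rfl fun v _ => ?_
  rw [faceChain, dif_pos ⟨hdc F v hF, by rw [card_erase_of_mem v.2, hc]; rfl⟩]
  rfl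

lemma boundary_formalBoundary (hdc : ∀ F : Finset V, ∀ v : V, isFace F → isFace (F.erase v))
    {q : ℕ} {S : Finset V} (hS : ∀ v ∈ S, isFace (S.erase v)) (hc : #S = q + 2) :
    boundary k V isFace hdc q (formalBoundary k isFace (q + 1) S) = 0 := by
  set f : V × V → Chains k V isFace q := fun p => if p.1 = p.2 then 0 else
    (-1 : k) ^ (numBelow S p.1 + numBelow (S.erase p.1) p.2) •
      faceChain k isFace q ((S.erase p.1).erase p.2) with hf
  have hrow : ∀ v ∈ S, boundary k V isFace hdc q
      ((-1 : k) ^ numBelow S v • faceChain k isFace (q + 1) (S.erase v)) = ∑ w ∈ S, f (v, w) := by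
    intro v hv
    rw [map_smul, boundary_faceChain hdc (hS v hv) (by rw [card_erase_of_mem hv, hc]; rfl),
      formalBoundary, smul_sum, ← sum_erase S (a := v) (by simp [hf])]
    refine sum_congr rfl fun w hw => ?_
    simp only [hf]
    rw [if_neg (ne_of_mem_erase hw).symm, smul_smul, pow_add]
  rw [formalBoundary, map_sum, sum_congr rfl hrow, ← sum_product]
  refine sum_involution (fun p _ => p.swap) (fun p hp => ?_) (fun p _ hfp hswap => hfp ?_)
    (fun p hp => mem_product.mpr (mem_product.mp hp).symm) (fun p _ => p.swap_swap)
  · obtain ⟨hp₁, hp₂⟩ := mem_product.mp hp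
    by_cases hpp : p.1 = p.2
    · simp [hf, hpp]
    · simp only [hf, Prod.fst_swap, Prod.snd_swap]
      rw [if_neg hpp, if_neg (Ne.symm hpp), erase_right_comm,
        neg_one_pow_numBelow_add_numBelow_erase hp₁ hp₂ hpp, neg_smul, neg_add_cancel]
  · simp only [hf]
    exact if_pos (congrArg Prod.snd hswap)

section Cochain

variable {C : Type*} [LinearOrder C]

variable (k) in
noncomputable def colourCochain (D : V → C) (T : Finset C) (q : ℕ) :
    Chains k V isFace q →ₗ[k] k :=
  Finsupp.lsum k fun F => LinearMap.toSpanSingleton k k (colourSign k D T F.1)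

omit [DecidableEq V] in
lemma colourCochain_faceChain {D : V → C} {T : Finset C} {q : ℕ} {F : Finset V}
    (hF : isFace F) (hc : #F = q) :
    colourCochain k D T q (faceChain k isFace q F) = colourSign k D T F := by
  rw [faceChain, dif_pos ⟨hF, hc⟩, colourCochain, Finsupp.lsum_single,
    LinearMap.toSpanSingleton_apply, one_smul]

lemma colourCochain_formalBoundary {D : V → C} {T : Finset C} {q : ℕ} {S : Finset V}
    (hS : ∀ v ∈ S, isFace (S.erase v)) (hc : #S = q + 1) :
    colourCochain k D T q (formalBoundary k isFace q S)
      = ∑ v ∈ S, (-1 : k) ^ numBelow S v * colourSign k D T (S.erase v) := by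
  rw [formalBoundary, map_sum]
  refine sum_congr rfl fun v hv => ?_
  rw [map_smul, colourCochain_faceChain (hS v hv) (by rw [card_erase_of_mem hv, hc]; rfl),
    smul_eq_mul]

lemma colourCochain_comp_boundary (hdc : ∀ F : Finset V, ∀ v : V, isFace F → isFace (F.erase v))
    {D : V → C} {T : Finset C} {q : ℕ} (hT : #T = q + 1)
    (hD : ∀ G, isFace G → #G = q + 2 → ¬ Set.InjOn D G) :
    (colourCochain k D T (q + 1)).comp (boundary k V isFace hdc (q + 1)) = 0 := by
  refine Finsupp.lhom_ext fun G c => ?_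
  have hG : Finsupp.single G c = c • faceChain k isFace (q + 2) G.1 := by
    rw [faceChain, dif_pos G.2, Finsupp.smul_single_one]
  rw [LinearMap.comp_apply, hG, map_smul, map_smul, boundary_faceChain hdc G.2.1 G.2.2,
    colourCochain_formalBoundary (fun v _ => hdc _ v G.2.1) G.2.2,
    sum_colourSign_erase_eq_zero (by rw [hT, G.2.2]) (hD G.1 G.2.1 G.2.2), smul_zero,
    LinearMap.zero_apply]

theorem range_boundary_ne_ker_of_colouring
    (hdc : ∀ F : Finset V, ∀ v : V, isFace F → isFace (F.erase v)) (D : V → C) {q : ℕ}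
    {S : Finset V} (hS : ∀ v ∈ S, isFace (S.erase v)) (hc : #S = q + 2) (hinj : Set.InjOn D S)
    (hD : ∀ G, isFace G → #G = q + 2 → ¬ Set.InjOn D G) :
    LinearMap.range (boundary k V isFace hdc (q + 1)) ≠
      LinearMap.ker (boundary k V isFace hdc q) := by
  obtain ⟨v₀, hv₀⟩ : S.Nonempty := card_pos.mp (by omega)
  have hT : #((S.erase v₀).image D) = q + 1 := by
    rw [card_image_of_injOn (hinj.mono (by simp)), card_erase_of_mem hv₀]
    omega
  intro h
  obtain ⟨c, hcz⟩ :
      formalBoundary k isFace (q + 1) S ∈ LinearMap.range (boundary k V isFace hdc (q + 1)) :=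
    h ▸ LinearMap.mem_ker.mpr (boundary_formalBoundary hdc hS hc)
  apply sum_colourSign_erase_ne_zero (R := k) hinj hv₀
  rw [← colourCochain_formalBoundary hS hc, ← hcz, ← LinearMap.comp_apply,
    colourCochain_comp_boundary hdc hT hD, LinearMap.zero_apply]

end Cochain

end Chains

section Delta

variable {n : ℕ} {a : Fin n → ℕ}

variable (n a) in
def deltaColour : Fin n ⊕ (Σ i : Fin n, Fin (a i)) → Fin n :=
  Sum.elim (finRotate n) Sigma.fst

lemma not_injOn_deltaColour (hn : 2 ≤ n) {G : Finset (Fin n ⊕ Σ i : Fin n, Fin (a i))}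
    (hG : deltaFace n a G) (hc : #G = n) : ¬ Set.InjOn (deltaColour n a) G := by
  obtain ⟨i, hi⟩ := hG
  have hsub : G.image (deltaColour n a) ⊆ univ.erase i := by
    intro c hcG
    obtain ⟨t, ht, rfl⟩ := mem_image.mp hcG
    rcases hi ht with h | ⟨p, hp, rfl⟩
    · rw [Set.mem_singleton_iff.mp h, mem_erase]
      exact ⟨Equiv.Perm.mem_support.mp (support_finRotate_of_le hn ▸ mem_univ i), mem_univ _⟩
    · exact mem_erase.mpr ⟨hp, mem_univ _⟩
  intro hinj
  have := card_le_card hsub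
  rw [card_image_of_injOn hinj, card_erase_of_mem (mem_univ i), card_univ,
    Fintype.card_fin] at this
  omega

variable (ha : ∀ i, 1 ≤ a i)

def yFirst (j : Fin n) : Fin n ⊕ Σ i : Fin n, Fin (a i) := Sum.inr ⟨j, ⟨0, ha j⟩⟩

def yTransversal : Finset (Fin n ⊕ Σ i : Fin n, Fin (a i)) := univ.image (yFirst ha)

lemma deltaColour_yFirst (j : Fin n) : deltaColour n a (yFirst ha j) = j := rfl

lemma card_yTransversal : #(yTransversal ha) = n := by
  rw [yTransversal, card_image_of_injective _ (Function.LeftInverse.injective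
    (deltaColour_yFirst ha)), card_univ, Fintype.card_fin]

lemma injOn_deltaColour_yTransversal : Set.InjOn (deltaColour n a) (yTransversal ha) := by
  simp only [yTransversal, coe_image, coe_univ, Set.image_univ]
  rintro _ ⟨i, rfl⟩ _ ⟨j, rfl⟩ h
  rw [deltaColour_yFirst, deltaColour_yFirst] at h
  rw [h]

lemma deltaFace_yTransversal_erase {v : Fin n ⊕ Σ i : Fin n, Fin (a i)}
    (hv : v ∈ yTransversal ha) :
    deltaFace n a ((yTransversal ha).erase v) := by
  obtain ⟨j, -, rfl⟩ := mem_image.mp hv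
  refine ⟨j, fun t ht => Or.inr ?_⟩
  obtain ⟨htj, ht⟩ := mem_erase.mp ht
  obtain ⟨i, -, rfl⟩ := mem_image.mp ht
  exact ⟨_, fun hij => htj (congrArg (yFirst ha) hij), rfl⟩

end Delta

/-- Let `Δ` be the simplicial complex whose facets are `F_i = {x_i} ∪ {y_{j,ℓ} : j ≠ i}`,
`i = 1,…,n`, with all `a i ≥ 1` and `n ≥ 2`.  Then the reduced simplicial homology
`H̃_{n-2}(Δ; k)` is nonzero, i.e. the boundaries form a proper submodule of the cycles in
homological degree `n - 2`. -/
theorem stmt15 (k : Type) [Field k] (n : ℕ) (hn : 2 ≤ n) (a : Fin n → ℕ) (ha : ∀ i, 1 ≤ a i)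
    [LinearOrder (Fin n ⊕ Σ i : Fin n, Fin (a i))] :
    LinearMap.range (boundary k (Fin n ⊕ Σ i : Fin n, Fin (a i)) (deltaFace n a)
        (deltaFace_downClosed n a) ((n - 2) + 1)) ≠
      LinearMap.ker (boundary k (Fin n ⊕ Σ i : Fin n, Fin (a i)) (deltaFace n a)
        (deltaFace_downClosed n a) (n - 2)) := by
  have hq : n - 2 + 2 = n := by omega
  exact range_boundary_ne_ker_of_colouring _ (deltaColour n a)
    (fun _ hv => deltaFace_yTransversal_erase ha hv) ((card_yTransversal ha).trans hq.symm)
    (injOn_deltaColour_yTransversal ha) fun G hG hc => not_injOn_deltaColour hn hG (hc.trans hq)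
end
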